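/- For integer v ≥ 2 and given d > 0, the function h(N) = C_SMI^SA(N) − C_PRI^SA(N) is positive for 0 < N < (6v/(2v−1))d and negative for N > (6v/(2v−1))d; i.e., N ↦ C_PRI^SA(N) − C_SMI^SA(N) changes sign exactly once on (0,∞), at N = (6v/(2v−1))d. -/
import Mathlib


theorem stmt_17 (v : ℕ) (hv : 2 ≤ v)
    (L I T d : ℝ) (hL : 0 < L) (hI : 0 < I) (hT : 0 < T) (hd : 0 < d) :
    (∀ N : ℝ, 0 < N → N < (6 * v / (2 * (v : ℝ) - 1)) * d →
      (L * I * T / (v : ℝ) ^ 2) *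
          (2 * N * d ^ 2 * ((v : ℝ) + 1) + N ^ 2 * d * ((v + 1) * (2 * v + 1)) / (3 * v))
        - L * I * T * (4 * N * d ^ 2 / v + 2 * N ^ 2 * d / (v : ℝ) ^ 2) < 0) ∧
    (∀ N : ℝ, (6 * v / (2 * (v : ℝ) - 1)) * d < N →
      0 < (L * I * T / (v : ℝ) ^ 2) *
          (2 * N * d ^ 2 * ((v : ℝ) + 1) + N ^ 2 * d * ((v + 1) * (2 * v + 1)) / (3 * v))
        - L * I * T * (4 * N * d ^ 2 / v + 2 * N ^ 2 * d / (v : ℝ) ^ 2)) := by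
  have hw : (2 : ℝ) ≤ (v : ℝ) := by exact_mod_cast hv
  have hw0 : (0 : ℝ) < (v : ℝ) := by linarith
  have hw1 : (0 : ℝ) < 2 * (v : ℝ) - 1 := by linarith
  have hwne : ((v : ℝ)) ≠ 0 := ne_of_gt hw0
  have key : ∀ N : ℝ,
      (L * I * T / (v : ℝ) ^ 2) *
          (2 * N * d ^ 2 * ((v : ℝ) + 1) + N ^ 2 * d * ((v + 1) * (2 * v + 1)) / (3 * v))
        - L * I * T * (4 * N * d ^ 2 / v + 2 * N ^ 2 * d / (v : ℝ) ^ 2)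
      = L * I * T * N * d * ((v : ℝ) - 1) * (N * (2 * (v : ℝ) - 1) - 6 * (v : ℝ) * d)
          / (3 * (v : ℝ) ^ 3) := by
    intro N
    field_simp
    ring
  have hLIT : 0 < L * I * T := by positivity
  constructor
  · intro N hN hNlt
    rw [key]
    have h1 : N * (2 * (v : ℝ) - 1) < 6 * (v : ℝ) * d := by
      have := (lt_div_iff₀ hw1).mp (by rw [div_mul_eq_mul_div] at hNlt; linarith [hNlt] : N < 6 * (v : ℝ) * d / (2 * (v : ℝ) - 1))
      linarith
    apply div_neg_of_neg_of_pos
    · have : 0 < L * I * T * N * d * ((v : ℝ) - 1) := by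
        have : (0:ℝ) < (v:ℝ) - 1 := by linarith
        positivity
      nlinarith
    · positivity
  · intro N hNgt
    rw [key]
    have hN : 0 < N := by
      have : 0 < (6 * (v:ℝ) / (2 * (v : ℝ) - 1)) * d := by positivity
      linarith
    have h1 : 6 * (v : ℝ) * d < N * (2 * (v : ℝ) - 1) := by
      have := (div_lt_iff₀ hw1).mp (by rw [div_mul_eq_mul_div] at hNgt; linarith [hNgt] : 6 * (v : ℝ) * d / (2 * (v : ℝ) - 1) < N)
      linarith
    apply div_pos
    · have h2 : 0 < L * I * T * N * d * ((v : ℝ) - 1) := by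
        have : (0:ℝ) < (v:ℝ) - 1 := by linarith
        positivity
      nlinarith
    · positivity
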